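/- Let g̃(t) = f_k(|p̃ γ̃(t)|) where γ̃ is a unit-speed geodesic in S²_k and p̃ ∈ S²_k, with |p̃ γ̃(t)| < π/√k for all t if k > 0. Then g̃''(t) + k·g̃(t) = 1 for all t. -/

import Mathlib

open Filter Set

/-- The model function `f_k`. -/
noncomputable def fk (k ρ : ℝ) : ℝ :=
  if 0 < k then (1 - Real.cos (Real.sqrt k * ρ)) / k
  else if k = 0 then ρ ^ 2 / 2
  else (Real.cosh (Real.sqrt (-k) * ρ) - 1) / (-k)

/-- Inverse hyperbolic cosine. -/
noncomputable def arcosh (x : ℝ) : ℝ := Real.log (x + Real.sqrt (x ^ 2 - 1))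

/-- The distance in `S²_k` from a fixed point `p̃` at distance `r` from `γ̃(0)` to the point
`γ̃(t)` of a unit-speed geodesic making angle `θ` with `[γ̃(0) p̃]`, given by the law of
cosines of the model space. -/
noncomputable def distAlong (k r θ t : ℝ) : ℝ :=
  if 0 < k then
    (1 / Real.sqrt k) * Real.arccos (Real.cos (Real.sqrt k * r) * Real.cos (Real.sqrt k * t)
      + Real.sin (Real.sqrt k * r) * Real.sin (Real.sqrt k * t) * Real.cos θ)
  else if k = 0 then Real.sqrt (r ^ 2 + t ^ 2 - 2 * r * t * Real.cos θ)
  else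
    (1 / Real.sqrt (-k)) * arcosh (Real.cosh (Real.sqrt (-k) * r) * Real.cosh (Real.sqrt (-k) * t)
      - Real.sinh (Real.sqrt (-k) * r) * Real.sinh (Real.sqrt (-k) * t) * Real.cos θ)

/-! The law of cosines expresses `cos (√k d)` (resp. `cosh (√-k d)`, resp. `d²`) along the
geodesic as a combination of `cos (√k t)` and `sin (√k t)` (resp. `cosh` and `sinh`, resp. a
quadratic polynomial in `t`). Since `f_k` is an affine function of exactly that quantity, `g̃` is
an explicit solution of the linear equation `g'' + k g = 1`. -/

open Real

lemma deriv_deriv_one_sub_div_add_mul_eq_one {F : ℝ → ℝ} {k t : ℝ} (hk : k ≠ 0)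
    (hF : deriv (deriv F) t = -k * F t) :
    deriv (deriv fun s => (1 - F s) / k) t + k * ((1 - F t) / k) = 1 := by
  have hderiv : deriv (fun s => (1 - F s) / k) = fun s => -deriv F s / k := by
    funext s
    rw [deriv_div_const, deriv_const_sub]
  rw [hderiv, deriv_div_const, deriv.fun_neg, hF]
  field_simp
  ring

lemma hasDerivAt_cos_sin_comb (a b w t : ℝ) :
    HasDerivAt (fun s => a * cos (w * s) + b * sin (w * s))
      (w * b * cos (w * t) + -(w * a) * sin (w * t)) t := by
  have hcos := ((hasDerivAt_id t).const_mul w).cos.const_mul a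
  have hsin := ((hasDerivAt_id t).const_mul w).sin.const_mul b
  exact (hcos.fun_add hsin).congr_deriv (by simp only [id]; ring)

lemma deriv_deriv_cos_sin_comb (a b w t : ℝ) :
    deriv (deriv fun s => a * cos (w * s) + b * sin (w * s)) t
      = -w ^ 2 * (a * cos (w * t) + b * sin (w * t)) := by
  have hderiv : deriv (fun s => a * cos (w * s) + b * sin (w * s))
      = fun s => w * b * cos (w * s) + -(w * a) * sin (w * s) :=
    funext fun s => (hasDerivAt_cos_sin_comb a b w s).deriv
  rw [hderiv, (hasDerivAt_cos_sin_comb _ _ w t).deriv]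
  ring

lemma hasDerivAt_cosh_sinh_comb (a b w t : ℝ) :
    HasDerivAt (fun s => a * cosh (w * s) + b * sinh (w * s))
      (w * b * cosh (w * t) + w * a * sinh (w * t)) t := by
  have hcosh := ((hasDerivAt_id t).const_mul w).cosh.const_mul a
  have hsinh := ((hasDerivAt_id t).const_mul w).sinh.const_mul b
  exact (hcosh.fun_add hsinh).congr_deriv (by simp only [id]; ring)

lemma deriv_deriv_cosh_sinh_comb (a b w t : ℝ) :
    deriv (deriv fun s => a * cosh (w * s) + b * sinh (w * s)) t
      = w ^ 2 * (a * cosh (w * t) + b * sinh (w * t)) := by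
  have hderiv : deriv (fun s => a * cosh (w * s) + b * sinh (w * s))
      = fun s => w * b * cosh (w * s) + w * a * sinh (w * s) :=
    funext fun s => (hasDerivAt_cosh_sinh_comb a b w s).deriv
  rw [hderiv, (hasDerivAt_cosh_sinh_comb _ _ w t).deriv]
  ring

lemma deriv_deriv_quadratic_div_two (a b t : ℝ) :
    deriv (deriv fun s => (a + b * s + s ^ 2) / 2) t = 1 := by
  have hderiv : ∀ s, HasDerivAt (fun s => (a + b * s + s ^ 2) / 2) ((b + 2 * s) / 2) s :=
    fun s => ((((hasDerivAt_id s).const_mul b).const_add a).fun_add (hasDerivAt_pow 2 s)).div_const 2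
      |>.congr_deriv (by norm_num)
  rw [funext fun s => (hderiv s).deriv]
  exact ((((hasDerivAt_id t).const_mul 2).const_add b).div_const 2).congr_deriv (by ring) |>.deriv

-- Both bounds hold because the expression is a convex combination of its values at `c = ±1`.
lemma abs_cos_mul_cos_add_sin_mul_sin_mul_le_one (a b c : ℝ) (hc : |c| ≤ 1) :
    |cos a * cos b + sin a * sin b * c| ≤ 1 := by
  rw [abs_le] at hc
  rw [show cos a * cos b + sin a * sin b * c = (1 + c) / 2 * cos (a - b) + (1 - c) / 2 * cos (a + b)
    by rw [cos_sub, cos_add]; ring, abs_le]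
  constructor <;> nlinarith [cos_le_one (a - b), cos_le_one (a + b), neg_one_le_cos (a - b),
    neg_one_le_cos (a + b)]

lemma one_le_cosh_mul_cosh_sub_sinh_mul_sinh_mul (a b c : ℝ) (hc : |c| ≤ 1) :
    1 ≤ cosh a * cosh b - sinh a * sinh b * c := by
  rw [abs_le] at hc
  rw [show cosh a * cosh b - sinh a * sinh b * c
      = (1 + c) / 2 * cosh (a - b) + (1 - c) / 2 * cosh (a + b)
    by rw [cosh_sub, cosh_add]; ring]
  nlinarith [one_le_cosh (a - b), one_le_cosh (a + b)]

lemma fk_distAlong_of_pos {k : ℝ} (hk : 0 < k) (r θ s : ℝ) :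
    fk k (distAlong k r θ s)
      = (1 - (cos (√k * r) * cos (√k * s) + sin (√k * r) * cos θ * sin (√k * s))) / k := by
  have hw : √k ≠ 0 := (sqrt_pos.2 hk).ne'
  have hbound := abs_le.1 <| abs_cos_mul_cos_add_sin_mul_sin_mul_le_one (√k * r) (√k * s) _
    (abs_cos_le_one θ)
  simp only [fk, distAlong, if_pos hk]
  rw [← mul_assoc, mul_one_div_cancel hw, one_mul, cos_arccos hbound.1 hbound.2]
  ring

lemma fk_distAlong_of_neg {k : ℝ} (hk : k < 0) (r θ s : ℝ) :
    fk k (distAlong k r θ s)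
      = (1 - (cosh (√(-k) * r) * cosh (√(-k) * s)
          + -(sinh (√(-k) * r) * cos θ) * sinh (√(-k) * s))) / k := by
  have hw : √(-k) ≠ 0 := (sqrt_pos.2 (neg_pos.2 hk)).ne'
  have hbound := one_le_cosh_mul_cosh_sub_sinh_mul_sinh_mul (√(-k) * r) (√(-k) * s) _
    (abs_cos_le_one θ)
  simp only [fk, distAlong, if_neg hk.not_gt, if_neg hk.ne]
  rw [← mul_assoc, mul_one_div_cancel hw, one_mul, show _root_.arcosh = Real.arcosh from rfl,
    cosh_arcosh hbound, div_neg, ← neg_div]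
  ring

lemma fk_distAlong_zero (r θ s : ℝ) :
    fk 0 (distAlong 0 r θ s) = (r ^ 2 + -2 * r * cos θ * s + s ^ 2) / 2 := by
  have hnonneg : 0 ≤ r ^ 2 + s ^ 2 - 2 * r * s * cos θ := by
    nlinarith [sq_nonneg (r - s * cos θ), sq_nonneg (s * sin θ), sin_sq_add_cos_sq θ]
  simp only [fk, distAlong, lt_irrefl, if_false, if_true]
  rw [sq_sqrt hnonneg]
  ring

theorem fk_dist_ode_general (k r θ : ℝ) :
    ∀ t : ℝ,
      deriv (deriv (fun s => fk k (distAlong k r θ s))) t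
        + k * fk k (distAlong k r θ t) = 1 := by
  intro t
  rcases lt_trichotomy k 0 with hk | rfl | hk
  · simp only [fk_distAlong_of_neg hk]
    refine deriv_deriv_one_sub_div_add_mul_eq_one hk.ne ?_
    rw [deriv_deriv_cosh_sinh_comb, sq_sqrt (neg_nonneg.2 hk.le)]
  · simp only [fk_distAlong_zero, zero_mul, add_zero]
    exact deriv_deriv_quadratic_div_two _ _ t
  · simp only [fk_distAlong_of_pos hk]
    refine deriv_deriv_one_sub_div_add_mul_eq_one hk.ne' ?_
    rw [deriv_deriv_cos_sin_comb, sq_sqrt hk.le]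

/-- `g̃(t) = f_k(|p̃ γ̃(t)|)` satisfies `g̃'' + k g̃ = 1` along any unit-speed geodesic of
`S²_k`. -/
theorem fk_dist_ode (k r θ : ℝ) (hr : 0 < r) (hθ : θ ∈ Set.Icc 0 Real.pi)
    (hrπ : 0 < k → ∀ t : ℝ, distAlong k r θ t < Real.pi / Real.sqrt k) :
    ∀ t : ℝ,
      deriv (deriv (fun s => fk k (distAlong k r θ s))) t
        + k * fk k (distAlong k r θ t) = 1 :=
  fk_dist_ode_general k r θ
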